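/- Let α > 0. Then for every γ > 0 the value B_{α,γ}(i) = (e^{−πγ} + e^{−πα})/(1 + e^{−π(γ+α)}) is a real number in (0,1) and satisfies 1 − B_{α,γ}(i) = (1−e^{−πγ})(1−e^{−πα})/(1+e^{−π(γ+α)}) ≤ (1−e^{−πα})·πγ. Consequently, for every α > 0, 0 < β < 1 and ρ > 0, the infinite product B(z) = ∏_{n=0}^∞ B_{α,β^nρ}(z) converges for every z in the upper half-plane ℂ₊ (the family of factors is multipliable at every z ∈ ℂ₊). -/

import Mathlib

/-!
With `w = e^{iπγz}` and `b = e^{−πα} ∈ (0,1)`, `B_{α,γ}(z) = (w + b)/(1 + wb)`, so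
`B_{α,γ}(z) − 1 = (w − 1)(1 − b)/(1 + wb)`. At `z = i` everything is real and the estimates are
elementary. On the closed upper half-plane `|w| ≤ 1`, hence `|1 + wb| ≥ 1 − b` and
`|B_{α,γ}(z) − 1| ≤ |e^{iπγz} − 1|`; for `γ = βⁿρ` the exponents `iπβⁿρz` form a geometric, hence
summable, series, so `∑ |B − 1| < ∞` and the product converges.
-/

open Complex

/-- The function `B_{α,γ}(z) = (e^{iπγz} + e^{−πα})/(1 + e^{iπγz−πα})`. -/
noncomputable def Bag (α γ : ℝ) (z : ℂ) : ℂ :=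
  (Complex.exp (Complex.I * Real.pi * γ * z) + Complex.exp (-(Real.pi * α : ℝ))) /
    (1 + Complex.exp (Complex.I * Real.pi * γ * z - (Real.pi * α : ℝ)))

theorem Real.exp_neg_pi_mul_lt_one {x : ℝ} (hx : 0 < x) : Real.exp (-(Real.pi * x)) < 1 :=
  Real.exp_lt_one_iff.2 (neg_neg_of_pos (by positivity))

theorem Real.one_sub_exp_neg_le (x : ℝ) : 1 - Real.exp (-x) ≤ x := by
  linarith [Real.one_sub_le_exp_neg x, Real.add_one_le_exp (-x)]

section

variable {a b : ℝ}

theorem one_sub_add_div_one_add_mul (h : 1 + a * b ≠ 0) :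
    1 - (a + b) / (1 + a * b) = (1 - a) * (1 - b) / (1 + a * b) := by
  field_simp
  ring

theorem add_div_one_add_mul_lt_one (ha₀ : 0 ≤ a) (ha₁ : a < 1) (hb₀ : 0 ≤ b) (hb₁ : b < 1) :
    (a + b) / (1 + a * b) < 1 := by
  rw [div_lt_one (by positivity)]
  nlinarith [mul_pos (sub_pos.2 ha₁) (sub_pos.2 hb₁)]

theorem one_sub_add_div_one_add_mul_le (ha₀ : 0 ≤ a) (ha₁ : a ≤ 1) (hb₀ : 0 ≤ b) (hb₁ : b ≤ 1) :
    1 - (a + b) / (1 + a * b) ≤ (1 - a) * (1 - b) := by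
  rw [one_sub_add_div_one_add_mul (by positivity)]
  exact div_le_self (mul_nonneg (sub_nonneg.2 ha₁) (sub_nonneg.2 hb₁)) (by nlinarith)

end

theorem Complex.norm_add_div_one_add_mul_sub_one_le {w : ℂ} {b : ℝ} (hw : ‖w‖ ≤ 1) (hb₀ : 0 ≤ b)
    (hb₁ : b < 1) : ‖(w + b) / (1 + w * b) - 1‖ ≤ ‖w - 1‖ := by
  have hwb : ‖w * b‖ ≤ b := by
    rw [norm_mul, Complex.norm_real, Real.norm_of_nonneg hb₀]
    exact mul_le_of_le_one_left hb₀ hw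
  have hden : 1 - b ≤ ‖1 + w * b‖ := by
    have := norm_sub_norm_le (1 : ℂ) (-(w * b))
    rw [norm_one, norm_neg, sub_neg_eq_add] at this
    linarith
  have hden₀ : 0 < ‖1 + w * b‖ := by linarith
  have hnorm_one_sub : ‖(1 : ℂ) - b‖ = 1 - b := by
    rw [← Complex.ofReal_one, ← Complex.ofReal_sub, Complex.norm_real,
      Real.norm_of_nonneg (by linarith)]
  rw [div_sub_one (norm_pos_iff.1 hden₀),
    show w + b - (1 + w * b) = (w - 1) * (1 - b) by ring, norm_div, norm_mul, hnorm_one_sub,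
    div_le_iff₀ hden₀]
  exact mul_le_mul_of_nonneg_left hden (norm_nonneg _)

theorem Complex.summable_exp_sub_one {ι : Type*} {f : ι → ℂ} (hf : Summable f) :
    Summable fun i ↦ Complex.exp (f i) - 1 := by
  refine (hf.norm.mul_left 2).of_norm_bounded_eventually ?_
  filter_upwards [hf.norm.tendsto_cofinite_zero.eventually_le_const one_pos] with i hi
    using Complex.norm_exp_sub_one_le hi

theorem Bag_eq (α γ : ℝ) (z : ℂ) :
    Bag α γ z = (Complex.exp (Complex.I * Real.pi * γ * z) + (Real.exp (-(Real.pi * α)) : ℝ)) /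
      (1 + Complex.exp (Complex.I * Real.pi * γ * z) * (Real.exp (-(Real.pi * α)) : ℝ)) := by
  rw [Bag, sub_eq_add_neg, Complex.exp_add, Complex.ofReal_exp, Complex.ofReal_neg]

theorem norm_exp_I_mul_pi_mul_le_one {γ : ℝ} (hγ : 0 ≤ γ) {z : ℂ} (hz : 0 ≤ z.im) :
    ‖Complex.exp (Complex.I * Real.pi * γ * z)‖ ≤ 1 := by
  rw [Complex.norm_exp, Real.exp_le_one_iff]
  simp only [Complex.mul_re, Complex.mul_im, Complex.I_re, Complex.I_im, Complex.ofReal_re,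
    Complex.ofReal_im]
  nlinarith [mul_nonneg (mul_nonneg Real.pi_pos.le hγ) hz]

theorem norm_Bag_sub_one_le {α γ : ℝ} (hα : 0 < α) (hγ : 0 ≤ γ) {z : ℂ} (hz : 0 ≤ z.im) :
    ‖Bag α γ z - 1‖ ≤ ‖Complex.exp (Complex.I * Real.pi * γ * z) - 1‖ := by
  rw [Bag_eq]
  exact Complex.norm_add_div_one_add_mul_sub_one_le (norm_exp_I_mul_pi_mul_le_one hγ hz)
    (Real.exp_pos _).le (Real.exp_neg_pi_mul_lt_one hα)

theorem Bag_I (α γ : ℝ) :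
    Bag α γ Complex.I =
      ((Real.exp (-(Real.pi * γ)) + Real.exp (-(Real.pi * α))) /
        (1 + Real.exp (-(Real.pi * (γ + α)))) : ℝ) := by
  have hexp :
      Complex.exp (Complex.I * Real.pi * γ * Complex.I) = (Real.exp (-(Real.pi * γ)) : ℝ) := by
    rw [Complex.ofReal_exp]
    congr 1
    push_cast
    linear_combination (Real.pi * γ : ℂ) * Complex.I_sq
  rw [Bag_eq, hexp, mul_add, neg_add, Real.exp_add]
  push_cast
  rfl

theorem summable_Bag_geometric_sub_one {α β ρ : ℝ} (hα : 0 < α) (hβ₀ : 0 ≤ β) (hβ₁ : β < 1)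
    (hρ : 0 ≤ ρ) {z : ℂ} (hz : 0 ≤ z.im) :
    Summable fun n : ℕ ↦ Bag α (β ^ n * ρ) z - 1 := by
  have hγ : Summable fun n : ℕ ↦ Complex.I * Real.pi * ((β ^ n * ρ : ℝ) : ℂ) * z :=
    ((Complex.summable_ofReal.2 ((summable_geometric_of_lt_one hβ₀ hβ₁).mul_right ρ)).mul_left
      (Complex.I * Real.pi)).mul_right z
  exact (Complex.summable_exp_sub_one hγ).norm.of_norm_bounded
    fun n ↦ norm_Bag_sub_one_le hα (by positivity) hz

theorem Bag_at_i_estimate_and_multipliable (α : ℝ) (hα : 0 < α) :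
    (∀ γ : ℝ, 0 < γ →
      Bag α γ Complex.I =
        ((Real.exp (-(Real.pi * γ)) + Real.exp (-(Real.pi * α))) /
          (1 + Real.exp (-(Real.pi * (γ + α)))) : ℝ) ∧
      (0 : ℝ) < (Real.exp (-(Real.pi * γ)) + Real.exp (-(Real.pi * α))) /
          (1 + Real.exp (-(Real.pi * (γ + α)))) ∧
      (Real.exp (-(Real.pi * γ)) + Real.exp (-(Real.pi * α))) /
          (1 + Real.exp (-(Real.pi * (γ + α)))) < 1 ∧
      1 - (Real.exp (-(Real.pi * γ)) + Real.exp (-(Real.pi * α))) /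
          (1 + Real.exp (-(Real.pi * (γ + α)))) =
        (1 - Real.exp (-(Real.pi * γ))) * (1 - Real.exp (-(Real.pi * α))) /
          (1 + Real.exp (-(Real.pi * (γ + α)))) ∧
      1 - (Real.exp (-(Real.pi * γ)) + Real.exp (-(Real.pi * α))) /
          (1 + Real.exp (-(Real.pi * (γ + α)))) ≤
        (1 - Real.exp (-(Real.pi * α))) * (Real.pi * γ)) ∧
    (∀ β ρ : ℝ, 0 < β → β < 1 → 0 < ρ → ∀ z : ℂ, 0 < z.im →
      Multipliable (fun n : ℕ => Bag α (β ^ n * ρ) z)) := by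
  refine ⟨fun γ hγ ↦ ?_, fun β ρ hβ₀ hβ₁ hρ z hz ↦ ?_⟩
  · have hexp : Real.exp (-(Real.pi * (γ + α))) =
        Real.exp (-(Real.pi * γ)) * Real.exp (-(Real.pi * α)) := by
      rw [mul_add, neg_add, Real.exp_add]
    have ha₁ : Real.exp (-(Real.pi * γ)) < 1 := Real.exp_neg_pi_mul_lt_one hγ
    have hb₁ : Real.exp (-(Real.pi * α)) < 1 := Real.exp_neg_pi_mul_lt_one hα
    have ha₀ := (Real.exp_pos (-(Real.pi * γ))).le
    have hb₀ := (Real.exp_pos (-(Real.pi * α))).le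
    rw [hexp]
    refine ⟨hexp ▸ Bag_I α γ, by positivity, add_div_one_add_mul_lt_one ha₀ ha₁ hb₀ hb₁,
      one_sub_add_div_one_add_mul (by positivity), ?_⟩
    calc _ ≤ (1 - Real.exp (-(Real.pi * γ))) * (1 - Real.exp (-(Real.pi * α))) :=
          one_sub_add_div_one_add_mul_le ha₀ ha₁.le hb₀ hb₁.le
      _ ≤ (1 - Real.exp (-(Real.pi * α))) * (Real.pi * γ) := by
        rw [mul_comm]
        exact mul_le_mul_of_nonneg_left (Real.one_sub_exp_neg_le _) (by linarith)
  · simpa using Complex.multipliable_one_add_of_summable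
      (summable_Bag_geometric_sub_one hα hβ₀.le hβ₁ hρ.le hz.le)
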